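/- Let S = (β, γ) be a standard symbol and j ≥ 2 an integer with j ∈ β ∩ γ and j−1 ∉ β ∪ γ. Let S′ be the symbol obtained from S by replacing the occurrence of j in β and the occurrence of j in γ both by j−1. Then S′ is standard and has the same pairs as S; the map which replaces both occurrences of j−1 by j is a bijection Σ′ ↦ Σ from C(S′) to C(S) with n(Σ) = n(Σ′); and f_{j−1}² u_{Σ′} = (v + v^{−1}) u_Σ for every Σ′ ∈ C(S′). Consequently f_{j−1}^{(2)} b_{S′} = b_S. -/

import Mathlib

namespace LM2003

open scoped BigOperators

/-- `(β, γ)` is a symbol in `Sy(n,k,r)`: two finite sets of integers contained in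
`{1, …, n+1}`, of cardinalities `k+r` and `k` (rows are identified with the subsets
they enumerate; strict increase is automatic). -/
def IsSymbol (n k r : ℕ) (β γ : Finset ℤ) : Prop :=
  β ⊆ Finset.Icc 1 ((n : ℤ) + 1) ∧ γ ⊆ Finset.Icc 1 ((n : ℤ) + 1) ∧
    β.card = k + r ∧ γ.card = k

/-- `(β,γ)` is standard: for each `i < |γ|`, the `i`-th smallest element of `β`
is `≤` the `i`-th smallest element of `γ`. -/
def IsStandard (β γ : Finset ℤ) : Prop :=
  ∀ i : ℕ, i < γ.card → (β.sort (· ≤ ·))[i]! ≤ (γ.sort (· ≤ ·))[i]!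

/-- Accumulated data after level `l` of the recursive definition of `ψ`:
the first component is `γ⁰ ∪ ⋯ ∪ γ^l` and the second is `ψ(γ⁰ ∪ ⋯ ∪ γ^l)`. -/
def psiAcc (β γ : Finset ℤ) : ℕ → Finset ℤ × Finset ℤ
  | 0 => (γ ∩ β, γ ∩ β)
  | l + 1 =>
    let p := psiAcc β γ l
    let g := (γ \ p.1).filter fun j => j - ((l : ℤ) + 1) ∈ β \ p.2
    (p.1 ∪ g, p.2 ∪ g.image fun j => j - ((l : ℤ) + 1))

/-- The level sets `γ^l` in the recursive definition of `ψ`. -/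
def gammaL (β γ : Finset ℤ) : ℕ → Finset ℤ
  | 0 => γ ∩ β
  | l + 1 =>
    (γ \ (psiAcc β γ l).1).filter fun j => j - ((l : ℤ) + 1) ∈ β \ (psiAcc β γ l).2

open Classical in
/-- The map `ψ` : for `j ∈ γ^l` it is `j ↦ j - l` (via the least such `l`),
and the identity elsewhere. -/
noncomputable def psiS (β γ : Finset ℤ) (j : ℤ) : ℤ :=
  if h : ∃ l, j ∈ gammaL β γ l then j - (Nat.find h : ℤ) else j

/-- The pairs of a (standard) symbol: the pairs `(j, ψ(j))` with `j ∈ γ` and `ψ(j) ≠ j`. -/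
noncomputable def pairsS (β γ : Finset ℤ) : Finset (ℤ × ℤ) :=
  (γ.filter fun j => psiS β γ j ≠ j).image fun j => (j, psiS β γ j)

/-- Exchanging, for every pair in `T`, the two members between the two rows of `(β,γ)`
(reordering of rows is automatic for sets). Pairs are written `(j, ψ j)` with `j` in the
bottom row `γ` and `ψ j` in the top row `β`. -/
def swapSymbol (β γ : Finset ℤ) (T : Finset (ℤ × ℤ)) : Finset ℤ × Finset ℤ :=
  ((β \ T.image Prod.snd) ∪ T.image Prod.fst,
   (γ \ T.image Prod.fst) ∪ T.image Prod.snd)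

/-- The class `C(S)` of a standard symbol: all symbols obtained by permuting a subset
of its pairs. -/
noncomputable def CSet (β γ : Finset ℤ) : Finset (Finset ℤ × Finset ℤ) :=
  (pairsS β γ).powerset.image (swapSymbol β γ)

/-- The Fock space `F(Λ)`: free `ℚ(v)`-module on the set of all symbols. -/
abbrev FF : Type := (Finset ℤ × Finset ℤ) →₀ RatFunc ℚ

/-- Standard basis vector `u_S`. -/
noncomputable def uS (S : Finset ℤ × Finset ℤ) : FF := Finsupp.single S 1

/-- The variable `v` of `K = ℚ(v)`. -/
noncomputable def vv : RatFunc ℚ := RatFunc.X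

/-- Action of the Chevalley generator `f_j` on the standard basis vector `u_S`. -/
noncomputable def fAct (j : ℤ) (S : Finset ℤ × Finset ℤ) : FF :=
  (if j ∈ S.2 ∧ j + 1 ∉ S.2 then uS (S.1, insert (j + 1) (S.2.erase j)) else 0) +
  (if j ∈ S.1 ∧ j + 1 ∉ S.1 then
      vv ^ ((if j ∈ S.2 then (1 : ℤ) else 0) - (if j + 1 ∈ S.2 then (1 : ℤ) else 0)) •
        uS (insert (j + 1) (S.1.erase j), S.2)
    else 0)

/-- The Chevalley generator `f_j` as a linear operator on `F`. -/
noncomputable def fLin (j : ℤ) : FF →ₗ[RatFunc ℚ] FF :=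
  Finsupp.lsum (RatFunc ℚ) fun S => LinearMap.toSpanSingleton (RatFunc ℚ) FF (fAct j S)

/-- Divided powers: `f_j^{(1)} = f_j`, `f_j^{(2)} = f_j² / (v + v⁻¹)`. -/
noncomputable def fDiv (j : ℤ) (m : ℕ) : FF →ₗ[RatFunc ℚ] FF :=
  if m = 2 then (vv + vv⁻¹)⁻¹ • (fLin j ∘ₗ fLin j) else fLin j

/-- `b_S = Σ_{Σ ∈ C(S)} v^{n(Σ)} u_Σ`, written as a sum over the subsets `T` of the
set of pairs of `S` (with `n(Σ) = |T|`). -/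
noncomputable def bS (β γ : Finset ℤ) : FF :=
  ∑ T ∈ (pairsS β γ).powerset, vv ^ T.card • uS (swapSymbol β γ T)

/-- `ι` is an involution of the finite set `Z`. -/
def IsInvolutionOn (Z : Finset ℤ) (ι : ℤ → ℤ) : Prop :=
  (∀ z ∈ Z, ι z ∈ Z) ∧ ∀ z ∈ Z, ι (ι z) = z

/-- `z < z'` are consecutive elements of `Z`. -/
def ConsecutiveIn (Z : Finset ℤ) (z z' : ℤ) : Prop :=
  z ∈ Z ∧ z' ∈ Z ∧ z < z' ∧ ∀ x ∈ Z, ¬(z < x ∧ x < z')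

/-- `r`-admissible involutions of a finite set `Z` of integers: `ι` is an involution of
`Z` with exactly `r` fixed points, and either `|Z| = r`, or there are two consecutive
elements `z < z'` of `Z` with `ι z = z'` whose removal again yields an `r`-admissible
involution. -/
inductive IsAdmissible (r : ℕ) : Finset ℤ → (ℤ → ℤ) → Prop
  | base (Z : Finset ℤ) (ι : ℤ → ℤ) (hinv : IsInvolutionOn Z ι)
      (hfix : (Z.filter fun z => ι z = z).card = r) (hcard : Z.card = r) :
      IsAdmissible r Z ι
  | step (Z : Finset ℤ) (ι : ℤ → ℤ) (z z' : ℤ) (hinv : IsInvolutionOn Z ι)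
      (hfix : (Z.filter fun w => ι w = w).card = r)
      (hcons : ConsecutiveIn Z z z') (hzz : ι z = z')
      (hrec : IsAdmissible r (Z \ {z, z'}) ι) :
      IsAdmissible r Z ι

/-- `c_j(S)`: number of occurrences of `j` among the entries of the symbol `(β,γ)`. -/
def contentS (β γ : Finset ℤ) (j : ℤ) : ℕ :=
  (if j ∈ β then 1 else 0) + (if j ∈ γ then 1 else 0)

/-!
Replacing the common entry `j` by `j - 1` (absent from both rows) acts on each row as the
transposition `(j j-1)`, which is order preserving there, so standardness survives. In the
construction of `ψ`, `j` lies in `γ⁰ = γ ∩ β` while `j - 1` lies in neither row, so all later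
levels `γ^l`, and with them the pairs, are unchanged. The members of a pair lie in exactly one row,
so exchanging pairs never touches `j` or `j - 1`: every `Σ' ∈ C(S')` has `j - 1` in both rows and
`j` in neither, and `f_{j-1}²` moves both entries up along the two possible orders, with weights
`v` and `v⁻¹`.
-/

def lowerEntry (j : ℤ) (s : Finset ℤ) : Finset ℤ := insert (j - 1) (s.erase j)

section LowerEntry

variable {j x : ℤ} {s t : Finset ℤ}

lemma mem_lowerEntry : x ∈ lowerEntry j s ↔ x = j - 1 ∨ x ≠ j ∧ x ∈ s := by
  simp [lowerEntry]

lemma mem_lowerEntry_of_ne (hx : x ≠ j) (hx1 : x ≠ j - 1) : x ∈ lowerEntry j s ↔ x ∈ s := by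
  simp [mem_lowerEntry, hx, hx1]

lemma lowerEntry_inter : lowerEntry j (s ∩ t) = lowerEntry j s ∩ lowerEntry j t := by
  ext x
  simp only [Finset.mem_inter, mem_lowerEntry]
  tauto

lemma lowerEntry_union (ht : j ∉ t) : lowerEntry j (s ∪ t) = lowerEntry j s ∪ t := by
  rw [lowerEntry, lowerEntry, Finset.erase_union_distrib, Finset.erase_eq_of_notMem ht,
    Finset.insert_union]

lemma lowerEntry_sdiff (ht : j - 1 ∉ t) : lowerEntry j (s \ t) = lowerEntry j s \ t := by
  rw [lowerEntry, lowerEntry, Finset.insert_sdiff_of_notMem _ ht, Finset.erase_sdiff_comm]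

lemma lowerEntry_sdiff_lowerEntry (ht : j ∈ t) (hs : j - 1 ∉ s) :
    lowerEntry j s \ lowerEntry j t = s \ t := by
  ext x
  simp only [Finset.mem_sdiff, mem_lowerEntry]
  grind

lemma card_lowerEntry (hj : j ∈ s) (h1 : j - 1 ∉ s) : (lowerEntry j s).card = s.card := by
  rw [lowerEntry, Finset.card_insert_of_notMem (fun h => h1 (Finset.mem_of_mem_erase h)),
    Finset.card_erase_add_one hj]

lemma insert_erase_lowerEntry (hj : j ∈ s) (h1 : j - 1 ∉ s) :
    insert j ((lowerEntry j s).erase (j - 1)) = s := by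
  rw [lowerEntry, Finset.erase_insert (fun h => h1 (Finset.mem_of_mem_erase h)),
    Finset.insert_erase hj]

lemma lowerEntry_eq_map (hj : j ∈ s) (h1 : j - 1 ∉ s) :
    lowerEntry j s = s.map (Equiv.swap j (j - 1)).toEmbedding := by
  ext x
  simp only [mem_lowerEntry, Finset.mem_map_equiv, Equiv.symm_swap, Equiv.swap_apply_def]
  split_ifs <;> grind

lemma strictMonoOn_swap_sub_one (j : ℤ) : StrictMonoOn (Equiv.swap j (j - 1)) {j - 1}ᶜ := by
  intro a ha b hb hab
  simp only [Set.mem_compl_iff, Set.mem_singleton_iff] at ha hb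
  simp only [Equiv.swap_apply_def]
  split_ifs <;> omega

end LowerEntry

lemma IsStandard.map {β γ : Finset ℤ} (h : IsStandard β γ) (hcard : γ.card ≤ β.card)
    (e : ℤ ↪ ℤ) (he : StrictMonoOn e (β ∪ γ)) : IsStandard (β.map e) (γ.map e) := by
  intro i hi
  rw [Finset.card_map] at hi
  have hiγ : i < (γ.sort (· ≤ ·)).length := by rwa [Finset.length_sort]
  have hiβ : i < (β.sort (· ≤ ·)).length := by rw [Finset.length_sort]; omega
  rw [← (he.mono Set.subset_union_left).map_finsetSort,
    ← (he.mono Set.subset_union_right).map_finsetSort,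
    getElem!_pos _ i (by simpa using hiβ), getElem!_pos _ i (by simpa using hiγ),
    List.getElem_map, List.getElem_map]
  have hle := h i hi
  rw [getElem!_pos _ i hiβ, getElem!_pos _ i hiγ] at hle
  refine he.monotoneOn ?_ ?_ hle
  · exact Or.inl ((Finset.mem_sort _).mp (List.getElem_mem hiβ))
  · exact Or.inr ((Finset.mem_sort _).mp (List.getElem_mem hiγ))

section Lowering

variable {β γ : Finset ℤ} {j : ℤ}

lemma IsStandard.lowerEntry (h : IsStandard β γ) (hcard : γ.card ≤ β.card)
    (hjβ : j ∈ β) (hjγ : j ∈ γ) (h1β : j - 1 ∉ β) (h1γ : j - 1 ∉ γ) :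
    IsStandard (lowerEntry j β) (lowerEntry j γ) := by
  rw [lowerEntry_eq_map hjβ h1β, lowerEntry_eq_map hjγ h1γ]
  refine h.map hcard _ ((strictMonoOn_swap_sub_one j).mono ?_)
  intro x hx hx1
  rcases hx with hx | hx
  · exact h1β (hx1 ▸ hx)
  · exact h1γ (hx1 ▸ hx)

lemma lowerEntry_subset_Icc {s : Finset ℤ} {n : ℕ} (hs : s ⊆ Finset.Icc 1 ((n : ℤ) + 1))
    (hj : j ∈ s) (hj2 : 2 ≤ j) : lowerEntry j s ⊆ Finset.Icc 1 ((n : ℤ) + 1) := by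
  have := Finset.mem_Icc.mp (hs hj)
  intro x hx
  rcases mem_lowerEntry.mp hx with rfl | ⟨-, hx⟩
  · rw [Finset.mem_Icc]; omega
  · exact hs hx

lemma IsSymbol.lowerEntry {n k r : ℕ} (h : IsSymbol n k r β γ) (hj : 2 ≤ j)
    (hjβ : j ∈ β) (hjγ : j ∈ γ) (h1β : j - 1 ∉ β) (h1γ : j - 1 ∉ γ) :
    IsSymbol n k r (lowerEntry j β) (lowerEntry j γ) := by
  obtain ⟨hβ, hγ, hβc, hγc⟩ := h
  exact ⟨lowerEntry_subset_Icc hβ hjβ hj, lowerEntry_subset_Icc hγ hjγ hj,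
    (card_lowerEntry hjβ h1β).trans hβc, (card_lowerEntry hjγ h1γ).trans hγc⟩

end Lowering

section Psi

variable {β γ : Finset ℤ} {x : ℤ}

lemma psiAcc_succ (l : ℕ) :
    psiAcc β γ (l + 1) = ((psiAcc β γ l).1 ∪ gammaL β γ (l + 1),
      (psiAcc β γ l).2 ∪ (gammaL β γ (l + 1)).image fun x => x - ((l : ℤ) + 1)) :=
  rfl

lemma mem_gammaL_succ {l : ℕ} :
    x ∈ gammaL β γ (l + 1) ↔ x ∈ γ \ (psiAcc β γ l).1 ∧ x - ((l : ℤ) + 1) ∈ β \ (psiAcc β γ l).2 :=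
  Finset.mem_filter

lemma inter_subset_psiAcc (l : ℕ) : γ ∩ β ⊆ (psiAcc β γ l).1 ∧ γ ∩ β ⊆ (psiAcc β γ l).2 := by
  induction l with
  | zero => exact ⟨subset_rfl, subset_rfl⟩
  | succ l ih =>
    rw [psiAcc_succ]
    exact ⟨ih.1.trans Finset.subset_union_left, ih.2.trans Finset.subset_union_left⟩

lemma psiS_eq_self (hx : x ∈ γ ∩ β) : psiS β γ x = x := by
  have h : ∃ l, x ∈ gammaL β γ l := ⟨0, hx⟩
  rw [psiS, dif_pos h, (Nat.find_eq_zero h).mpr hx, Nat.cast_zero, sub_zero]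

lemma exists_mem_gammaL_succ_of_psiS_ne (hx : psiS β γ x ≠ x) :
    ∃ l : ℕ, x ∈ gammaL β γ (l + 1) ∧ psiS β γ x = x - ((l : ℤ) + 1) := by
  have h : ∃ l, x ∈ gammaL β γ l := by
    by_contra h
    exact hx (by rw [psiS, dif_neg h])
  have hval : psiS β γ x = x - (Nat.find h : ℤ) := by rw [psiS, dif_pos h]
  obtain ⟨l, hl⟩ : ∃ l, Nat.find h = l + 1 :=
    Nat.exists_eq_succ_of_ne_zero fun h0 => hx (by rw [hval, h0, Nat.cast_zero, sub_zero])
  exact ⟨l, hl ▸ Nat.find_spec h, by rw [hval, hl, Nat.cast_succ]⟩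

lemma mem_pairsS {p : ℤ × ℤ} (hp : p ∈ pairsS β γ) : p.1 ∈ γ \ β ∧ p.2 ∈ β \ γ := by
  obtain ⟨x, hx, rfl⟩ := Finset.mem_image.mp hp
  obtain ⟨hxγ, hne⟩ := Finset.mem_filter.mp hx
  obtain ⟨l, hl, hψ⟩ := exists_mem_gammaL_succ_of_psiS_ne hne
  obtain ⟨hx1, hx2⟩ := mem_gammaL_succ.mp hl
  have hinter := inter_subset_psiAcc (β := β) (γ := γ) l
  refine ⟨Finset.mem_sdiff.mpr ⟨hxγ, fun hxβ => ?_⟩, ?_⟩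
  · exact (Finset.mem_sdiff.mp hx1).2 (hinter.1 (Finset.mem_inter.mpr ⟨hxγ, hxβ⟩))
  · rw [hψ]
    obtain ⟨hβ, hacc⟩ := Finset.mem_sdiff.mp hx2
    exact Finset.mem_sdiff.mpr ⟨hβ, fun hγ => hacc (hinter.2 (Finset.mem_inter.mpr ⟨hγ, hβ⟩))⟩

end Psi

section LowerPsi

variable {β γ : Finset ℤ} {j : ℤ} (hjβ : j ∈ β) (hjγ : j ∈ γ) (h1β : j - 1 ∉ β) (h1γ : j - 1 ∉ γ)
include hjβ hjγ h1β h1γ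

lemma gammaL_succ_lowerEntry_of_psiAcc {l : ℕ}
    (h : psiAcc (lowerEntry j β) (lowerEntry j γ) l =
      (lowerEntry j (psiAcc β γ l).1, lowerEntry j (psiAcc β γ l).2)) :
    gammaL (lowerEntry j β) (lowerEntry j γ) (l + 1) = gammaL β γ (l + 1) := by
  have hj := Finset.mem_inter.mpr ⟨hjγ, hjβ⟩
  simp only [gammaL, h, lowerEntry_sdiff_lowerEntry ((inter_subset_psiAcc l).1 hj) h1γ,
    lowerEntry_sdiff_lowerEntry ((inter_subset_psiAcc l).2 hj) h1β]

lemma psiAcc_lowerEntry (l : ℕ) :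
    psiAcc (lowerEntry j β) (lowerEntry j γ) l =
      (lowerEntry j (psiAcc β γ l).1, lowerEntry j (psiAcc β γ l).2) := by
  induction l with
  | zero => simp only [psiAcc, lowerEntry_inter]
  | succ l ih =>
    have hj := Finset.mem_inter.mpr ⟨hjγ, hjβ⟩
    have hjg : j ∉ gammaL β γ (l + 1) := fun h =>
      (Finset.mem_sdiff.mp (mem_gammaL_succ.mp h).1).2 ((inter_subset_psiAcc l).1 hj)
    have hjimg : j ∉ (gammaL β γ (l + 1)).image fun x => x - ((l : ℤ) + 1) := by
      simp only [Finset.mem_image, not_exists, not_and]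
      intro x hx hxj
      exact (Finset.mem_sdiff.mp (mem_gammaL_succ.mp hx).2).2
        (hxj ▸ (inter_subset_psiAcc l).2 hj)
    rw [psiAcc_succ, psiAcc_succ, ih,
      gammaL_succ_lowerEntry_of_psiAcc hjβ hjγ h1β h1γ ih,
      lowerEntry_union hjg, lowerEntry_union hjimg]

lemma mem_gammaL_lowerEntry_iff {x : ℤ} (hx : x ≠ j) (hx1 : x ≠ j - 1) (l : ℕ) :
    x ∈ gammaL (lowerEntry j β) (lowerEntry j γ) l ↔ x ∈ gammaL β γ l := by
  cases l with
  | zero =>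
    change x ∈ lowerEntry j γ ∩ lowerEntry j β ↔ x ∈ γ ∩ β
    rw [← lowerEntry_inter, mem_lowerEntry_of_ne hx hx1]
  | succ l =>
    rw [gammaL_succ_lowerEntry_of_psiAcc hjβ hjγ h1β h1γ (psiAcc_lowerEntry hjβ hjγ h1β h1γ l)]

lemma psiS_lowerEntry {x : ℤ} (hx : x ≠ j) (hx1 : x ≠ j - 1) :
    psiS (lowerEntry j β) (lowerEntry j γ) x = psiS β γ x := by
  have hiff := mem_gammaL_lowerEntry_iff hjβ hjγ h1β h1γ hx hx1
  unfold psiS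
  by_cases h : ∃ l, x ∈ gammaL β γ l
  · have h' : ∃ l, x ∈ gammaL (lowerEntry j β) (lowerEntry j γ) l :=
      h.imp fun l => (hiff l).mpr
    rw [dif_pos h', dif_pos h, Nat.find_congr' (hiff _)]
  · rw [dif_neg (by simpa only [hiff] using h), dif_neg h]

lemma pairsS_lowerEntry : pairsS (lowerEntry j β) (lowerEntry j γ) = pairsS β γ := by
  have hj1 : j - 1 ∈ lowerEntry j γ ∩ lowerEntry j β := by
    rw [← lowerEntry_inter, lowerEntry]; exact Finset.mem_insert_self _ _
  have hfilter : (lowerEntry j γ).filter (fun x => psiS (lowerEntry j β) (lowerEntry j γ) x ≠ x)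
      = γ.filter fun x => psiS β γ x ≠ x := by
    ext x
    simp only [Finset.mem_filter]
    by_cases hx1 : x = j - 1
    · subst hx1
      simp [psiS_eq_self hj1, h1γ]
    by_cases hx : x = j
    · subst hx
      simp [psiS_eq_self (Finset.mem_inter.mpr ⟨hjγ, hjβ⟩), mem_lowerEntry, hx1]
    rw [mem_lowerEntry_of_ne hx hx1, psiS_lowerEntry hjβ hjγ h1β h1γ hx hx1]
  unfold pairsS
  rw [hfilter]
  refine Finset.image_congr fun x hx => ?_
  obtain ⟨hxγ, hne⟩ := Finset.mem_filter.mp (Finset.mem_coe.mp hx)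
  have hxj : x ≠ j := fun h => hne (h ▸ psiS_eq_self (Finset.mem_inter.mpr ⟨hjγ, hjβ⟩))
  have hxj1 : x ≠ j - 1 := fun h => h1γ (h ▸ hxγ)
  simp only [psiS_lowerEntry hjβ hjγ h1β h1γ hxj hxj1]

end LowerPsi

section Swap

variable {β γ : Finset ℤ} {T : Finset (ℤ × ℤ)} {x : ℤ}

lemma image_fst_subset_of_subset_pairsS (hT : T ⊆ pairsS β γ) : T.image Prod.fst ⊆ γ \ β := by
  intro a ha
  obtain ⟨p, hp, rfl⟩ := Finset.mem_image.mp ha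
  exact (mem_pairsS (hT hp)).1

lemma image_snd_subset_of_subset_pairsS (hT : T ⊆ pairsS β γ) : T.image Prod.snd ⊆ β \ γ := by
  intro b hb
  obtain ⟨p, hp, rfl⟩ := Finset.mem_image.mp hb
  exact (mem_pairsS (hT hp)).2

lemma mem_swapSymbol_of_mem_inter (hT : T ⊆ pairsS β γ) (hx : x ∈ β ∩ γ) :
    x ∈ (swapSymbol β γ T).1 ∧ x ∈ (swapSymbol β γ T).2 := by
  have hfst : x ∈ T.image Prod.fst → x ∈ γ ∧ x ∉ β := fun h =>
    Finset.mem_sdiff.mp (image_fst_subset_of_subset_pairsS hT h)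
  have hsnd : x ∈ T.image Prod.snd → x ∈ β ∧ x ∉ γ := fun h =>
    Finset.mem_sdiff.mp (image_snd_subset_of_subset_pairsS hT h)
  simp only [Finset.mem_inter] at hx
  simp only [swapSymbol, Finset.mem_union, Finset.mem_sdiff]
  tauto

lemma notMem_swapSymbol_of_notMem_union (hT : T ⊆ pairsS β γ) (hx : x ∉ β ∪ γ) :
    x ∉ (swapSymbol β γ T).1 ∧ x ∉ (swapSymbol β γ T).2 := by
  have hfst : x ∈ T.image Prod.fst → x ∈ γ ∧ x ∉ β := fun h =>
    Finset.mem_sdiff.mp (image_fst_subset_of_subset_pairsS hT h)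
  have hsnd : x ∈ T.image Prod.snd → x ∈ β ∧ x ∉ γ := fun h =>
    Finset.mem_sdiff.mp (image_snd_subset_of_subset_pairsS hT h)
  simp only [Finset.mem_union, not_or] at hx
  simp only [swapSymbol, Finset.mem_union, Finset.mem_sdiff]
  tauto

lemma swapSymbol_lowerEntry {j : ℤ} (hT : T ⊆ pairsS β γ) (hjβ : j ∈ β) (hjγ : j ∈ γ)
    (h1β : j - 1 ∉ β) (h1γ : j - 1 ∉ γ) :
    swapSymbol (lowerEntry j β) (lowerEntry j γ) T =
      Prod.map (lowerEntry j) (lowerEntry j) (swapSymbol β γ T) := by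
  have hfst : ∀ a ∈ T.image Prod.fst, a ∈ γ ∧ a ∉ β := fun _ h =>
    Finset.mem_sdiff.mp (image_fst_subset_of_subset_pairsS hT h)
  have hsnd : ∀ b ∈ T.image Prod.snd, b ∈ β ∧ b ∉ γ := fun _ h =>
    Finset.mem_sdiff.mp (image_snd_subset_of_subset_pairsS hT h)
  simp only [swapSymbol, Prod.map]
  rw [lowerEntry_union fun h => (hfst _ h).2 hjβ, lowerEntry_union fun h => (hsnd _ h).2 hjγ,
    lowerEntry_sdiff fun h => h1β (hsnd _ h).1, lowerEntry_sdiff fun h => h1γ (hfst _ h).1]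

end Swap

lemma fLin_uS (i : ℤ) (S : Finset ℤ × Finset ℤ) : fLin i (uS S) = fAct i S := by
  simp [fLin, uS]

lemma fLin_fLin_uS {i : ℤ} {S : Finset ℤ × Finset ℤ} (h1 : i ∈ S.1) (h2 : i ∈ S.2)
    (hs1 : i + 1 ∉ S.1) (hs2 : i + 1 ∉ S.2) :
    fLin i (fLin i (uS S)) =
      (vv + vv⁻¹) • uS (insert (i + 1) (S.1.erase i), insert (i + 1) (S.2.erase i)) := by
  have hne : i + 1 ≠ i := by omega
  simp [fLin_uS, fAct, h1, h2, hs1, hs2, hne, add_smul, add_comm]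

lemma vv_add_inv_ne_zero : vv + vv⁻¹ ≠ 0 := by
  have hX : vv ≠ 0 := RatFunc.X_ne_zero
  have hsq : vv ^ 2 + 1 ≠ 0 := by
    have := RatFunc.algebraMap_ne_zero (Polynomial.X_pow_add_C_ne_zero two_pos (1 : ℚ))
    simpa [vv] using this
  intro h
  apply hsq
  calc vv ^ 2 + 1 = vv * (vv + vv⁻¹) := by field_simp
    _ = 0 := by rw [h, mul_zero]

lemma fLin_sub_one_fLin_sub_one_uS_lowerEntry {j : ℤ} {σ : Finset ℤ × Finset ℤ}
    (h1 : j ∈ σ.1) (h2 : j ∈ σ.2) (h1' : j - 1 ∉ σ.1) (h2' : j - 1 ∉ σ.2) :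
    fLin (j - 1) (fLin (j - 1) (uS (Prod.map (lowerEntry j) (lowerEntry j) σ))) =
      (vv + vv⁻¹) • uS σ := by
  have hj : j ∉ lowerEntry j σ.1 ∧ j ∉ lowerEntry j σ.2 := by
    simp [mem_lowerEntry, show j ≠ j - 1 by omega]
  rw [fLin_fLin_uS (Finset.mem_insert_self _ _) (Finset.mem_insert_self _ _)
    (by rw [sub_add_cancel]; exact hj.1) (by rw [sub_add_cancel]; exact hj.2)]
  simp only [Prod.map_fst, Prod.map_snd, sub_add_cancel, insert_erase_lowerEntry h1 h1',
    insert_erase_lowerEntry h2 h2']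

section LowerClass

variable {β γ : Finset ℤ} {j : ℤ} (hjβ : j ∈ β) (hjγ : j ∈ γ) (h1β : j - 1 ∉ β) (h1γ : j - 1 ∉ γ)
include hjβ hjγ h1β h1γ

lemma mem_swapSymbol_and_sub_one_notMem {T : Finset (ℤ × ℤ)} (hT : T ⊆ pairsS β γ) :
    (j ∈ (swapSymbol β γ T).1 ∧ j ∈ (swapSymbol β γ T).2) ∧
      (j - 1 ∉ (swapSymbol β γ T).1 ∧ j - 1 ∉ (swapSymbol β γ T).2) :=
  ⟨mem_swapSymbol_of_mem_inter hT (Finset.mem_inter.mpr ⟨hjβ, hjγ⟩),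
    notMem_swapSymbol_of_notMem_union hT (by simp [h1β, h1γ])⟩

lemma fLin_sub_one_fLin_sub_one_uS_swapSymbol_lowerEntry {T : Finset (ℤ × ℤ)} (hT : T ⊆ pairsS β γ) :
    fLin (j - 1) (fLin (j - 1) (uS (swapSymbol (lowerEntry j β) (lowerEntry j γ) T))) =
      (vv + vv⁻¹) • uS (swapSymbol β γ T) := by
  obtain ⟨⟨h1, h2⟩, h1', h2'⟩ := mem_swapSymbol_and_sub_one_notMem hjβ hjγ h1β h1γ hT
  rw [swapSymbol_lowerEntry hT hjβ hjγ h1β h1γ, fLin_sub_one_fLin_sub_one_uS_lowerEntry h1 h2 h1' h2']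

lemma insert_erase_swapSymbol_lowerEntry {T : Finset (ℤ × ℤ)} (hT : T ⊆ pairsS β γ) :
    (insert j ((swapSymbol (lowerEntry j β) (lowerEntry j γ) T).1.erase (j - 1)),
      insert j ((swapSymbol (lowerEntry j β) (lowerEntry j γ) T).2.erase (j - 1))) =
      swapSymbol β γ T := by
  obtain ⟨⟨h1, h2⟩, h1', h2'⟩ := mem_swapSymbol_and_sub_one_notMem hjβ hjγ h1β h1γ hT
  rw [swapSymbol_lowerEntry hT hjβ hjγ h1β h1γ, Prod.map_fst, Prod.map_snd,
    insert_erase_lowerEntry h1 h1', insert_erase_lowerEntry h2 h2']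

lemma CSet_lowerEntry :
    CSet (lowerEntry j β) (lowerEntry j γ) =
      (CSet β γ).image (Prod.map (lowerEntry j) (lowerEntry j)) := by
  rw [CSet, CSet, Finset.image_image, pairsS_lowerEntry hjβ hjγ h1β h1γ]
  exact Finset.image_congr fun T hT =>
    swapSymbol_lowerEntry (Finset.mem_powerset.mp hT) hjβ hjγ h1β h1γ

lemma bijOn_CSet_lowerEntry :
    Set.BijOn (fun σ : Finset ℤ × Finset ℤ =>
        (insert j (σ.1.erase (j - 1)), insert j (σ.2.erase (j - 1))))
      (CSet (lowerEntry j β) (lowerEntry j γ) : Set (Finset ℤ × Finset ℤ))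
      (CSet β γ : Set (Finset ℤ × Finset ℤ)) := by
  have hinv : Set.LeftInvOn (fun σ : Finset ℤ × Finset ℤ =>
        (insert j (σ.1.erase (j - 1)), insert j (σ.2.erase (j - 1))))
      (Prod.map (lowerEntry j) (lowerEntry j)) (CSet β γ : Set (Finset ℤ × Finset ℤ)) := by
    intro σ hσ
    obtain ⟨T, hT, rfl⟩ := Finset.mem_image.mp (Finset.mem_coe.mp hσ)
    rw [← swapSymbol_lowerEntry (Finset.mem_powerset.mp hT) hjβ hjγ h1β h1γ]
    exact insert_erase_swapSymbol_lowerEntry hjβ hjγ h1β h1γ (Finset.mem_powerset.mp hT)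
  rw [CSet_lowerEntry hjβ hjγ h1β h1γ, Finset.coe_image]
  simpa only [hinv.image_image] using hinv.rightInvOn_image.injOn.bijOn_image

end LowerClass

lemma fDiv_two_bS_lowerEntry {β γ : Finset ℤ} {j : ℤ} (hjβ : j ∈ β) (hjγ : j ∈ γ)
    (h1β : j - 1 ∉ β) (h1γ : j - 1 ∉ γ) :
    fDiv (j - 1) 2 (bS (lowerEntry j β) (lowerEntry j γ)) = bS β γ := by
  rw [fDiv, if_pos rfl, LinearMap.smul_apply, LinearMap.comp_apply, bS, bS,
    pairsS_lowerEntry hjβ hjγ h1β h1γ, map_sum, map_sum, Finset.smul_sum]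
  refine Finset.sum_congr rfl fun T hT => ?_
  rw [map_smul, map_smul, fLin_sub_one_fLin_sub_one_uS_swapSymbol_lowerEntry hjβ hjγ h1β h1γ
    (Finset.mem_powerset.mp hT), smul_comm, inv_smul_smul₀ vv_add_inv_ne_zero]

theorem statement3_general (n k r : ℕ)
    (β γ : Finset ℤ) (hS : IsSymbol n k r β γ) (hstd : IsStandard β γ)
    (j : ℤ) (hj : 2 ≤ j) (hjβ : j ∈ β) (hjγ : j ∈ γ)
    (hj1β : j - 1 ∉ β) (hj1γ : j - 1 ∉ γ)
    (β' γ' : Finset ℤ)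
    (hβ' : β' = insert (j - 1) (β.erase j)) (hγ' : γ' = insert (j - 1) (γ.erase j)) :
    IsSymbol n k r β' γ' ∧ IsStandard β' γ' ∧
    pairsS β' γ' = pairsS β γ ∧
    Set.BijOn (fun σ : Finset ℤ × Finset ℤ =>
        (insert j (σ.1.erase (j - 1)), insert j (σ.2.erase (j - 1))))
      (CSet β' γ' : Set (Finset ℤ × Finset ℤ)) (CSet β γ : Set (Finset ℤ × Finset ℤ)) ∧
    (∀ T ∈ (pairsS β' γ').powerset,
        (insert j ((swapSymbol β' γ' T).1.erase (j - 1)),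
         insert j ((swapSymbol β' γ' T).2.erase (j - 1))) = swapSymbol β γ T) ∧
    (∀ σ ∈ CSet β' γ',
        fLin (j - 1) (fLin (j - 1) (uS σ)) =
          (vv + vv⁻¹) • uS (insert j (σ.1.erase (j - 1)), insert j (σ.2.erase (j - 1)))) ∧
    fDiv (j - 1) 2 (bS β' γ') = bS β γ := by
  obtain rfl : β' = lowerEntry j β := hβ'
  obtain rfl : γ' = lowerEntry j γ := hγ'
  have hpairs := pairsS_lowerEntry hjβ hjγ hj1β hj1γ
  have hcard : γ.card ≤ β.card := by
    obtain ⟨-, -, hβc, hγc⟩ := hS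
    omega
  refine ⟨hS.lowerEntry hj hjβ hjγ hj1β hj1γ, hstd.lowerEntry hcard hjβ hjγ hj1β hj1γ, hpairs,
    bijOn_CSet_lowerEntry hjβ hjγ hj1β hj1γ, fun T hT => ?_, fun σ hσ => ?_,
    fDiv_two_bS_lowerEntry hjβ hjγ hj1β hj1γ⟩
  · rw [hpairs, Finset.mem_powerset] at hT
    exact insert_erase_swapSymbol_lowerEntry hjβ hjγ hj1β hj1γ hT
  · obtain ⟨T, hT, rfl⟩ := Finset.mem_image.mp hσ
    rw [hpairs, Finset.mem_powerset] at hT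
    rw [fLin_sub_one_fLin_sub_one_uS_swapSymbol_lowerEntry hjβ hjγ hj1β hj1γ hT,
      insert_erase_swapSymbol_lowerEntry hjβ hjγ hj1β hj1γ hT]

/-- case (a) of the proof of Theorem 2.1. If `j ∈ β ∩ γ`, `j ≥ 2` and
`j-1 ∉ β ∪ γ`, and `S'` is obtained from `S` by changing both occurrences of `j` into
`j-1`, then `S'` is a standard symbol with the same pairs as `S`, replacing both
occurrences of `j-1` by `j` is a bijection from `C(S')` to `C(S)` preserving `n(·)`,
`f_{j-1}² u_{Σ'} = (v+v⁻¹) u_Σ` for all `Σ' ∈ C(S')`, and `f_{j-1}^{(2)} b_{S'} = b_S`. -/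
theorem statement3 (n k r : ℕ) (hn : 2 ≤ n) (hk : 1 ≤ k) (hkr : k + r ≤ n)
    (β γ : Finset ℤ) (hS : IsSymbol n k r β γ) (hstd : IsStandard β γ)
    (j : ℤ) (hj : 2 ≤ j) (hjβ : j ∈ β) (hjγ : j ∈ γ)
    (hj1β : j - 1 ∉ β) (hj1γ : j - 1 ∉ γ)
    (β' γ' : Finset ℤ)
    (hβ' : β' = insert (j - 1) (β.erase j)) (hγ' : γ' = insert (j - 1) (γ.erase j)) :
    IsSymbol n k r β' γ' ∧ IsStandard β' γ' ∧
    pairsS β' γ' = pairsS β γ ∧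
    Set.BijOn (fun σ : Finset ℤ × Finset ℤ =>
        (insert j (σ.1.erase (j - 1)), insert j (σ.2.erase (j - 1))))
      (CSet β' γ' : Set (Finset ℤ × Finset ℤ)) (CSet β γ : Set (Finset ℤ × Finset ℤ)) ∧
    (∀ T ∈ (pairsS β' γ').powerset,
        (insert j ((swapSymbol β' γ' T).1.erase (j - 1)),
         insert j ((swapSymbol β' γ' T).2.erase (j - 1))) = swapSymbol β γ T) ∧
    (∀ σ ∈ CSet β' γ',
        fLin (j - 1) (fLin (j - 1) (uS σ)) =
          (vv + vv⁻¹) • uS (insert j (σ.1.erase (j - 1)), insert j (σ.2.erase (j - 1)))) ∧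
    fDiv (j - 1) 2 (bS β' γ') = bS β γ :=
  statement3_general n k r β γ hS hstd j hj hjβ hjγ hj1β hj1γ β' γ' hβ' hγ'

end LM2003
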